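/- arXiv:math/0603358 — 2 statements merged into one kernel-verified Lean document; each statement's English description precedes it below -/
import Mathlib

section
/- Let $n \geq 5$ and let $Q(\mathbf{X}) = A_1 X_1^2 + \cdots + A_n X_n^2$ be a diagonal quadratic form with nonzero integer coefficients not all of the same sign. Assume (Ou–Williams) that for every quinary diagonal indefinite form $B_1 Y_1^2 + \cdots + B_5 Y_5^2$ with nonzero integer coefficients there exists a nonzero $\mathbf{y} \in \mathbb{Z}^5$ with $\sum B_i y_i^2 = 0$ and $\sum |B_i| y_i^2 \leq 2 |B_1 \cdots B_5|$. Then there exists a nonzero $\mathbf{x} \in \mathbb{Z}^n$ with $Q(\mathbf{x}) = 0$ and $\max_i |x_i| \leq \sqrt{2}\, \|Q\|^2$, where $\|Q\| = \max_i |A_i|$. -/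
open Finset

theorem stmt8 (n : ℕ) (hn : 5 ≤ n) (A : Fin n → ℤ) (hA : ∀ i, A i ≠ 0)
    (hpos : ∃ i, 0 < A i) (hneg : ∃ i, A i < 0)
    (ouWilliams : ∀ B : Fin 5 → ℤ, (∀ i, B i ≠ 0) → (∃ i, 0 < B i) → (∃ i, B i < 0) →
      ∃ y : Fin 5 → ℤ, y ≠ 0 ∧ ∑ i, B i * y i ^ 2 = 0 ∧
        ∑ i, |B i| * y i ^ 2 ≤ 2 * |∏ i, B i|) :
    ∃ x : Fin n → ℤ, x ≠ 0 ∧ ∑ i, A i * x i ^ 2 = 0 ∧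
      ∀ i, (|x i| : ℝ) ≤ Real.sqrt 2 *
        ((Finset.univ.sup' ⟨⟨0, by omega⟩, Finset.mem_univ _⟩ fun j => |A j|) : ℤ) ^ 2 := by
  obtain ⟨p, hp⟩ := hpos
  obtain ⟨q, hq⟩ := hneg
  set M : ℤ := (Finset.univ.sup' ⟨⟨0, by omega⟩, Finset.mem_univ _⟩ fun j => |A j|) with hM
  have hMle : ∀ j, |A j| ≤ M := fun j => by rw [hM]; exact Finset.le_sup' (fun j => |A j|) (Finset.mem_univ j)
  have hM1 : 1 ≤ M := le_trans (Int.one_le_abs (hA p)) (hMle p)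
  -- find a 5-element subset containing p and q
  have hcard2 : ({p, q} : Finset (Fin n)).card ≤ 5 :=
    le_trans (Finset.card_insert_le _ _) (by simp)
  obtain ⟨t, hst, -, htcard⟩ :=
    Finset.exists_subsuperset_card_eq (Finset.subset_univ {p, q}) hcard2
      (by simp [hn])
  set e := t.orderIsoOfFin htcard with he
  set B : Fin 5 → ℤ := fun i => A (e i) with hB
  have hpt : p ∈ t := hst (by simp)
  have hqt : q ∈ t := hst (by simp)
  have hBne : ∀ i, B i ≠ 0 := fun i => hA _
  have hBpos : ∃ i, 0 < B i := ⟨e.symm ⟨p, hpt⟩, by simp [hB, hp]⟩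
  have hBneg : ∃ i, B i < 0 := ⟨e.symm ⟨q, hqt⟩, by simp [hB, hq]⟩
  obtain ⟨y, hy0, hysum, hybound⟩ := ouWilliams B hBne hBpos hBneg
  set x : Fin n → ℤ := fun j => if h : j ∈ t then y (e.symm ⟨j, h⟩) else 0 with hx
  have hxe : ∀ i : Fin 5, x (e i) = y i := by
    intro i
    have h : (e i : Fin n) ∈ t := (e i).2
    simp only [hx, dif_pos h]
    congr 1
    rw [show (⟨(e i : Fin n), h⟩ : t) = e i from rfl, OrderIso.symm_apply_apply]
  refine ⟨x, ?_, ?_, ?_⟩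
  · obtain ⟨i, hi⟩ := Function.ne_iff.mp hy0
    exact Function.ne_iff.mpr ⟨e i, by simpa [hxe i] using hi⟩
  · have hsum : ∑ j, A j * x j ^ 2 = ∑ j ∈ t, A j * x j ^ 2 := by
      rw [← Finset.sum_subset (Finset.subset_univ t)]
      intro j _ hj
      simp [hx, dif_neg hj]
    rw [hsum]
    rw [show ∑ j ∈ t, A j * x j ^ 2 = ∑ a : t, A a * x a ^ 2 from
      (Finset.sum_coe_sort t _).symm]
    rw [← e.toEquiv.sum_comp (fun a : t => A a * (x a) ^ 2)]
    rw [← hysum]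
    refine Finset.sum_congr rfl fun i _ => ?_
    simp [hxe i, hB]
  · intro j
    have key : x j ^ 2 ≤ 2 * M ^ 4 := by
      by_cases h : j ∈ t
      · set i := e.symm ⟨j, h⟩ with hi
        have hxj : x j = y i := by simp [hx, dif_pos h]; rfl
        have h1 : |B i| * y i ^ 2 ≤ ∑ k, |B k| * y k ^ 2 :=
          Finset.single_le_sum (f := fun k => |B k| * y k ^ 2)
            (fun k _ => mul_nonneg (abs_nonneg _) (sq_nonneg _)) (Finset.mem_univ i)
        have h2 : |∏ k, B k| = ∏ k, |B k| := Finset.abs_prod _ _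
        have h3 : ∏ k, |B k| = |B i| * ∏ k ∈ Finset.univ.erase i, |B k| :=
          (Finset.mul_prod_erase _ _ (Finset.mem_univ i)).symm
        have h4 : ∏ k ∈ Finset.univ.erase i, |B k| ≤ M ^ 4 := by
          calc ∏ k ∈ Finset.univ.erase i, |B k| ≤ ∏ _k ∈ Finset.univ.erase i, M :=
            Finset.prod_le_prod (fun k _ => abs_nonneg _) (fun k _ => hMle _)
          _ = M ^ 4 := by
            rw [Finset.prod_const, Finset.card_erase_of_mem (Finset.mem_univ i),
              Finset.card_univ, Fintype.card_fin]
        have hBi : 1 ≤ |B i| := Int.one_le_abs (hBne i)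
        have : |B i| * y i ^ 2 ≤ |B i| * (2 * M ^ 4) := by
          calc |B i| * y i ^ 2 ≤ 2 * |∏ k, B k| := le_trans h1 hybound
          _ = |B i| * (2 * ∏ k ∈ Finset.univ.erase i, |B k|) := by rw [h2, h3]; ring
          _ ≤ |B i| * (2 * M ^ 4) := by
              apply mul_le_mul_of_nonneg_left _ (abs_nonneg _)
              linarith
        rw [hxj]
        exact le_of_mul_le_mul_left this (lt_of_lt_of_le zero_lt_one hBi)
      · simp only [hx, dif_neg h]
        positivity
    have hcast : ((x j : ℝ))^2 ≤ 2 * ((M:ℝ)^2)^2 := by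
      have h5 : ((x j ^ 2 : ℤ) : ℝ) ≤ ((2 * M ^ 4 : ℤ) : ℝ) := by exact_mod_cast key
      push_cast at h5
      nlinarith [h5]
    rw [← Real.sqrt_sq_eq_abs]
    rw [show Real.sqrt 2 * ((M:ℝ))^2 = Real.sqrt (2 * ((M:ℝ)^2)^2) by
      rw [Real.sqrt_mul (by norm_num), Real.sqrt_sq (by positivity)]]
    exact Real.sqrt_le_sqrt hcast
end

section
/- Let $q \in \mathbb{N}$, $k \in \mathbb{Z}$, $\mathbf{c} \in \mathbb{Z}^n$, and let $Q \in \mathbb{Z}[X_1,\ldots,X_n]$ be a quadratic form. Define $S_q(\mathbf{c}) = \sum_{\substack{a=1 \\ \gcd(a,q)=1}}^{q} \sum_{\mathbf{b} \bmod q} e_q\big(a(Q(\mathbf{b}) - k) + \mathbf{b} \cdot \mathbf{c}\big)$, where $e_q(x) = e^{2\pi i x / q}$. If $\gcd(u,v) = 1$, then $S_{uv}(\mathbf{c}) = S_u(\bar{v}\mathbf{c}) \, S_v(\bar{u}\mathbf{c})$, where $v\bar{v} \equiv 1 \pmod u$ and $u\bar{u} \equiv 1 \pmod v$. -/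
open Finset

/-- The complete exponential sum
`S_q(c) = ∑_{a mod q, gcd(a,q)=1} ∑_{b mod q} e_q(a(Q(b)-k) + b·c)`,
for the quadratic form `Q(b) = bᵀ A b` with integral Gram matrix `A`. -/
noncomputable def expSumS (n : ℕ) (A : Matrix (Fin n) (Fin n) ℤ) (k : ℤ)
    (q : ℕ) (c : Fin n → ℤ) : ℂ :=
  ∑ a ∈ (Finset.Icc 1 q).filter (fun a => Nat.Coprime a q),
    ∑ b ∈ Fintype.piFinset (fun _ : Fin n => Finset.range q),
      Complex.exp (2 * Real.pi * Complex.I *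
        ((((a : ℤ) * ((∑ i, ∑ j, A i j * (b i : ℤ) * (b j : ℤ)) - k)
          + ∑ i, (b i : ℤ) * c i : ℤ) : ℂ) / (q : ℂ)))

namespace Stmt12Aux

noncomputable def eQ (q : ℕ) (x : ℤ) : ℂ :=
  Complex.exp (2 * Real.pi * Complex.I * ((x : ℂ) / (q : ℂ)))

lemma eQ_congr {q : ℕ} {x y : ℤ} (h : x ≡ y [ZMOD (q : ℤ)]) : eQ q x = eQ q y := by
  rcases eq_or_ne q 0 with rfl | hq
  · have : x = y := by simpa [Int.ModEq] using h
    rw [this]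
  · obtain ⟨t, ht⟩ := h.dvd
    have hq' : (q : ℂ) ≠ 0 := Nat.cast_ne_zero.2 hq
    have hy : (y : ℂ) = (x : ℂ) + (q : ℂ) * (t : ℂ) := by
      have : y = x + (q : ℤ) * t := by linarith [ht]
      exact_mod_cast congrArg (Int.cast : ℤ → ℂ) this
    unfold eQ
    rw [hy]
    have harith : 2 * (Real.pi : ℂ) * Complex.I * (((x : ℂ) + (q : ℂ) * t) / (q : ℂ))
        = 2 * (Real.pi : ℂ) * Complex.I * ((x : ℂ) / (q : ℂ)) + (t : ℂ) * (2 * (Real.pi : ℂ) * Complex.I) := by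
      field_simp
    rw [harith, Complex.exp_add, Complex.exp_int_mul_two_pi_mul_I, mul_one]

noncomputable def psi (q : ℕ) (x : ZMod q) : ℂ := eQ q (x.val : ℤ)

lemma psi_intCast (q : ℕ) [NeZero q] (x : ℤ) : psi q ((x : ℤ) : ZMod q) = eQ q x := by
  apply eQ_congr
  show (((x : ZMod q).val : ℤ)) ≡ x [ZMOD (q : ℤ)]
  rw [ZMod.val_intCast]
  exact Int.emod_emod_of_dvd x dvd_rfl

def toRep (q : ℕ) (x : ZMod q) : ℕ := if x.val = 0 then q else x.val

lemma natCast_toRep {q : ℕ} [NeZero q] (x : ZMod q) : ((toRep q x : ℕ) : ZMod q) = x := by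
  unfold toRep
  split
  · next h =>
    have hx : x = 0 := (ZMod.val_eq_zero x).1 h
    simp [hx]
  · exact ZMod.natCast_zmod_val x

lemma toRep_mem {q : ℕ} [NeZero q] (w : (ZMod q)ˣ) :
    toRep q (w : ZMod q) ∈ (Finset.Icc 1 q).filter (fun a => Nat.Coprime a q) := by
  have hco := ZMod.val_coe_unit_coprime w
  unfold toRep
  split
  · next h =>
    have hq1 : q = 1 := by simpa [h, Nat.coprime_zero_left] using hco
    subst hq1
    simp [Nat.Coprime]
  · next h =>
    refine Finset.mem_filter.2 ⟨Finset.mem_Icc.2 ⟨Nat.one_le_iff_ne_zero.2 h, (ZMod.val_lt _).le⟩, hco⟩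

lemma toRep_natCast {q a : ℕ} [NeZero q] (ha : a ∈ Finset.Icc 1 q) :
    toRep q ((a : ℕ) : ZMod q) = a := by
  obtain ⟨h1, h2⟩ := Finset.mem_Icc.1 ha
  rcases eq_or_lt_of_le h2 with rfl | hlt
  · simp [toRep]
  · rw [toRep, ZMod.val_cast_of_lt hlt, if_neg (by omega)]



noncomputable def zSum (n : ℕ) (A : Matrix (Fin n) (Fin n) ℤ) (k : ℤ)
    (q : ℕ) [NeZero q] (c : Fin n → ℤ) : ℂ :=
  ∑ a : (ZMod q)ˣ, ∑ b : Fin n → ZMod q,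
    psi q ((a : ZMod q) * ((∑ i, ∑ j, (A i j : ZMod q) * b i * b j) - (k : ZMod q))
      + ∑ i, b i * ((c i : ℤ) : ZMod q))

lemma expSumS_eq_zSum (n : ℕ) (A : Matrix (Fin n) (Fin n) ℤ) (k : ℤ)
    (q : ℕ) [NeZero q] (c : Fin n → ℤ) :
    expSumS n A k q c = zSum n A k q c := by
  unfold expSumS zSum
  refine Finset.sum_bij' (i := fun a ha => ZMod.unitOfCoprime a (Finset.mem_filter.1 ha).2)
    (j := fun w _ => toRep q (w : ZMod q)) (fun a ha => Finset.mem_univ _)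
    (fun w hw => toRep_mem w) ?_ ?_ ?_
  · intro a ha
    show toRep q ((ZMod.unitOfCoprime a _ : (ZMod q)ˣ) : ZMod q) = a
    rw [ZMod.coe_unitOfCoprime]
    exact toRep_natCast (Finset.mem_filter.1 ha).1
  · intro w hw
    apply Units.ext
    show ((ZMod.unitOfCoprime (toRep q (w : ZMod q)) _ : (ZMod q)ˣ) : ZMod q) = (w : ZMod q)
    rw [ZMod.coe_unitOfCoprime]
    exact natCast_toRep _
  · intro a ha
    show _ = ∑ b : Fin n → ZMod q, psi q (((ZMod.unitOfCoprime a _ : (ZMod q)ˣ) : ZMod q) * _ + _)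
    rw [ZMod.coe_unitOfCoprime]
    refine Finset.sum_nbij' (i := fun b => (fun idx => ((b idx : ℕ) : ZMod q)))
      (j := fun b => (fun idx => (b idx).val)) (fun b hb => Finset.mem_univ _) ?_ ?_ ?_ ?_
    · intro b _
      exact Fintype.mem_piFinset.2 fun idx => Finset.mem_range.2 (ZMod.val_lt _)
    · intro b hb
      funext idx
      exact ZMod.val_cast_of_lt (Finset.mem_range.1 (Fintype.mem_piFinset.1 hb idx))
    · intro b _
      funext idx
      exact ZMod.natCast_zmod_val _
    · intro b hb
      show eQ q _ = psi q _
      rw [← psi_intCast]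
      congr 1
      push_cast
      ring

-- step 1: the exponential splitting over integers
lemma eQ_split (u v : ℕ) [NeZero u] [NeZero v] (huv : Nat.Coprime u v)
    (ubar vbar : ℤ) (hvbar : (v : ℤ) * vbar ≡ 1 [ZMOD (u : ℤ)])
    (hubar : (u : ℤ) * ubar ≡ 1 [ZMOD (v : ℤ)]) (x : ℤ) :
    eQ (u * v) x = eQ u (vbar * x) * eQ v (ubar * x) := by
  obtain ⟨t, ht⟩ : ∃ t : ℤ, (v : ℤ) * vbar + u * ubar = 1 + (u * v) * t := by
    have hz1 : (u : ℤ) * ubar ≡ 0 [ZMOD (u : ℤ)] := Int.modEq_zero_iff_dvd.2 (dvd_mul_right _ _)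
    have hz2 : (v : ℤ) * vbar ≡ 0 [ZMOD (v : ℤ)] := Int.modEq_zero_iff_dvd.2 (dvd_mul_right _ _)
    have h1 : (v : ℤ) * vbar + u * ubar ≡ 1 [ZMOD (u : ℤ)] := by simpa using hvbar.add hz1
    have h2 : (v : ℤ) * vbar + u * ubar ≡ 1 [ZMOD (v : ℤ)] := by simpa using hz2.add hubar
    have h3 : (v : ℤ) * vbar + u * ubar ≡ 1 [ZMOD ((u : ℤ) * v)] :=
      (Int.modEq_and_modEq_iff_modEq_mul (by simpa using huv)).1 ⟨h1, h2⟩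
    obtain ⟨t, htt⟩ := h3.dvd
    exact ⟨-t, by linear_combination -htt⟩
  have hu0 : (u : ℂ) ≠ 0 := Nat.cast_ne_zero.2 (NeZero.ne u)
  have hv0 : (v : ℂ) ≠ 0 := Nat.cast_ne_zero.2 (NeZero.ne v)
  unfold eQ
  rw [← Complex.exp_add]
  have hht : ((v : ℂ) * (vbar : ℂ) + (u : ℂ) * (ubar : ℂ)) = 1 + (u : ℂ) * (v : ℂ) * (t : ℂ) := by
    exact_mod_cast congrArg (Int.cast : ℤ → ℂ) ht
  have key : 2 * (Real.pi : ℂ) * Complex.I * (((vbar * x : ℤ) : ℂ) / (u : ℂ))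
      + 2 * (Real.pi : ℂ) * Complex.I * (((ubar * x : ℤ) : ℂ) / (v : ℂ))
      = 2 * (Real.pi : ℂ) * Complex.I * ((x : ℂ) / (((u * v : ℕ) : ℕ) : ℂ))
        + ((x * t : ℤ) : ℂ) * (2 * (Real.pi : ℂ) * Complex.I) := by
    push_cast
    field_simp
    ring_nf
    linear_combination (x : ℂ) * hht
  rw [key, Complex.exp_add, Complex.exp_int_mul_two_pi_mul_I, mul_one]

lemma psi_split (u v : ℕ) [NeZero u] [NeZero v] [NeZero (u * v)] (huv : Nat.Coprime u v)
    (ubar vbar : ℤ) (hvbar : (v : ℤ) * vbar ≡ 1 [ZMOD (u : ℤ)])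
    (hubar : (u : ℤ) * ubar ≡ 1 [ZMOD (v : ℤ)]) (x : ZMod (u * v)) :
    psi (u * v) x
      = psi u ((vbar : ZMod u) * (ZMod.castHom (dvd_mul_right u v) (ZMod u) x))
        * psi v ((ubar : ZMod v) * (ZMod.castHom (dvd_mul_left v u) (ZMod v) x)) := by
  have h1 : (vbar : ZMod u) * (ZMod.castHom (dvd_mul_right u v) (ZMod u) x)
      = ((vbar * (x.val : ℤ) : ℤ) : ZMod u) := by
    rw [ZMod.castHom_apply, ← ZMod.natCast_val]
    push_cast
    ring
  have h2 : (ubar : ZMod v) * (ZMod.castHom (dvd_mul_left v u) (ZMod v) x)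
      = ((ubar * (x.val : ℤ) : ℤ) : ZMod v) := by
    rw [ZMod.castHom_apply, ← ZMod.natCast_val]
    push_cast
    ring
  rw [h1, h2, psi_intCast, psi_intCast]
  exact eQ_split u v huv ubar vbar hvbar hubar _

lemma zSum_mul (n : ℕ) (A : Matrix (Fin n) (Fin n) ℤ) (k : ℤ)
    (u v : ℕ) [NeZero u] [NeZero v] [NeZero (u * v)] (huv : Nat.Coprime u v)
    (ubar vbar : ℤ) (hvbar : (v : ℤ) * vbar ≡ 1 [ZMOD (u : ℤ)])
    (hubar : (u : ℤ) * ubar ≡ 1 [ZMOD (v : ℤ)]) (c : Fin n → ℤ) :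
    zSum n A k (u * v) c
      = zSum n A k u (fun i => vbar * c i) * zSum n A k v (fun i => ubar * c i) := by
  classical
  have hval_u : (v : ZMod u) * (vbar : ZMod u) = 1 := by
    have := (ZMod.intCast_eq_intCast_iff _ _ _).2 hvbar
    push_cast at this
    simpa using this
  have hval_v : (u : ZMod v) * (ubar : ZMod v) = 1 := by
    have := (ZMod.intCast_eq_intCast_iff _ _ _).2 hubar
    push_cast at this
    simpa using this
  set wu : (ZMod u)ˣ := ⟨(vbar : ZMod u), (v : ZMod u), by rw [mul_comm]; exact hval_u, hval_u⟩
    with hwu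
  set wv : (ZMod v)ˣ := ⟨(ubar : ZMod v), (u : ZMod v), by rw [mul_comm]; exact hval_v, hval_v⟩
    with hwv
  set φ := ZMod.chineseRemainder huv with hφdef
  set ρu := ZMod.castHom (dvd_mul_right u v) (ZMod u) with hρu
  set ρv := ZMod.castHom (dvd_mul_left v u) (ZMod v) with hρv
  have hφ1 : ∀ x : ZMod (u * v), (φ x).1 = ρu x := by
    intro x
    show ((ZMod.cast x : ZMod u × ZMod v)).1 = _
    rw [Prod.fst_zmod_cast, ZMod.castHom_apply]
  have hφ2 : ∀ x : ZMod (u * v), (φ x).2 = ρv x := by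
    intro x
    show ((ZMod.cast x : ZMod u × ZMod v)).2 = _
    rw [Prod.snd_zmod_cast, ZMod.castHom_apply]
  set Ea : (ZMod (u * v))ˣ ≃ (ZMod u)ˣ × (ZMod v)ˣ :=
    ((Units.mapEquiv φ.toMulEquiv).trans MulEquiv.prodUnits).toEquiv.trans
      (Equiv.prodCongr (Equiv.mulLeft wu) (Equiv.mulLeft wv)) with hEa
  set Eb : (Fin n → ZMod (u * v)) ≃ (Fin n → ZMod u) × (Fin n → ZMod v) :=
    (Equiv.piCongrRight fun _ => φ.toEquiv).trans (Equiv.arrowProdEquivProdArrow _ _ _) with hEb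
  have hEa1 : ∀ a : (ZMod (u * v))ˣ,
      (((Ea a).1 : (ZMod u)ˣ) : ZMod u) = (vbar : ZMod u) * ρu (a : ZMod (u * v)) := by
    intro a
    show (vbar : ZMod u) * ((φ ((a : ZMod (u * v)))).1) = _
    rw [hφ1]
  have hEa2 : ∀ a : (ZMod (u * v))ˣ,
      (((Ea a).2 : (ZMod v)ˣ) : ZMod v) = (ubar : ZMod v) * ρv (a : ZMod (u * v)) := by
    intro a
    show (ubar : ZMod v) * ((φ ((a : ZMod (u * v)))).2) = _
    rw [hφ2]
  have hEb1 : ∀ (b : Fin n → ZMod (u * v)) (i : Fin n), (Eb b).1 i = ρu (b i) :=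
    fun b i => hφ1 (b i)
  have hEb2 : ∀ (b : Fin n → ZMod (u * v)) (i : Fin n), (Eb b).2 i = ρv (b i) :=
    fun b i => hφ2 (b i)
  set F₁ : (ZMod u)ˣ → (Fin n → ZMod u) → ℂ := fun w β =>
    psi u ((w : ZMod u) * ((∑ i, ∑ j, (A i j : ZMod u) * β i * β j) - (k : ZMod u))
      + ∑ i, β i * ((vbar * c i : ℤ) : ZMod u)) with hF₁
  set F₂ : (ZMod v)ˣ → (Fin n → ZMod v) → ℂ := fun w β =>
    psi v ((w : ZMod v) * ((∑ i, ∑ j, (A i j : ZMod v) * β i * β j) - (k : ZMod v))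
      + ∑ i, β i * ((ubar * c i : ℤ) : ZMod v)) with hF₂
  have hterm : ∀ (a : (ZMod (u * v))ˣ) (b : Fin n → ZMod (u * v)),
      psi (u * v) ((a : ZMod (u * v))
          * ((∑ i, ∑ j, (A i j : ZMod (u * v)) * b i * b j) - (k : ZMod (u * v)))
        + ∑ i, b i * ((c i : ℤ) : ZMod (u * v)))
      = F₁ (Ea a).1 (Eb b).1 * F₂ (Ea a).2 (Eb b).2 := by
    intro a b
    rw [psi_split u v huv ubar vbar hvbar hubar]
    rw [hF₁, hF₂]
    congr 1
    · congr 1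
      rw [hEa1]
      simp only [map_add, map_mul, map_sub, map_sum, map_intCast, hEb1]
      have hc : ∀ i, ((vbar * c i : ℤ) : ZMod u) = (vbar : ZMod u) * ((c i : ℤ) : ZMod u) := by
        intro i; push_cast; ring
      simp only [hc]
      rw [mul_add]
      congr 1
      · ring
      · rw [Finset.mul_sum]
        exact Finset.sum_congr rfl fun i _ => by ring
    · congr 1
      rw [hEa2]
      simp only [map_add, map_mul, map_sub, map_sum, map_intCast, hEb2]
      have hc : ∀ i, ((ubar * c i : ℤ) : ZMod v) = (ubar : ZMod v) * ((c i : ℤ) : ZMod v) := by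
        intro i; push_cast; ring
      simp only [hc]
      rw [mul_add]
      congr 1
      · ring
      · rw [Finset.mul_sum]
        exact Finset.sum_congr rfl fun i _ => by ring
  calc zSum n A k (u * v) c
      = ∑ a : (ZMod (u * v))ˣ, ∑ b : Fin n → ZMod (u * v),
          F₁ (Ea a).1 (Eb b).1 * F₂ (Ea a).2 (Eb b).2 := by
        unfold zSum
        exact Finset.sum_congr rfl fun a _ => Finset.sum_congr rfl fun b _ => hterm a b
    _ = ∑ p : (ZMod u)ˣ × (ZMod v)ˣ, ∑ q : (Fin n → ZMod u) × (Fin n → ZMod v),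
          F₁ p.1 q.1 * F₂ p.2 q.2 := by
        refine Fintype.sum_equiv Ea _ _ fun a => ?_
        exact Fintype.sum_equiv Eb _ _ fun b => rfl
    _ = ∑ p : (ZMod u)ˣ × (ZMod v)ˣ, (∑ β : Fin n → ZMod u, F₁ p.1 β)
          * (∑ β : Fin n → ZMod v, F₂ p.2 β) := by
        refine Finset.sum_congr rfl fun p _ => ?_
        rw [Fintype.sum_prod_type, ← Finset.sum_mul_sum]
    _ = (∑ w : (ZMod u)ˣ, ∑ β : Fin n → ZMod u, F₁ w β)
          * (∑ w : (ZMod v)ˣ, ∑ β : Fin n → ZMod v, F₂ w β) := by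
        rw [Fintype.sum_prod_type]
        rw [Finset.sum_mul_sum Finset.univ Finset.univ
          (fun w => ∑ β : Fin n → ZMod u, F₁ w β) (fun w => ∑ β : Fin n → ZMod v, F₂ w β)]
    _ = zSum n A k u (fun i => vbar * c i) * zSum n A k v (fun i => ubar * c i) := rfl

end Stmt12Aux

theorem stmt12 (n : ℕ) (A : Matrix (Fin n) (Fin n) ℤ) (hA : A.IsSymm) (k : ℤ)
    (u v : ℕ) (hu : 0 < u) (hv : 0 < v) (huv : Nat.Coprime u v)
    (ubar vbar : ℤ) (hvbar : (v : ℤ) * vbar ≡ 1 [ZMOD (u : ℤ)])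
    (hubar : (u : ℤ) * ubar ≡ 1 [ZMOD (v : ℤ)]) (c : Fin n → ℤ) :
    expSumS n A k (u * v) c
      = expSumS n A k u (fun i => vbar * c i) * expSumS n A k v (fun i => ubar * c i) := by
  haveI : NeZero u := ⟨hu.ne'⟩
  haveI : NeZero v := ⟨hv.ne'⟩
  haveI : NeZero (u * v) := ⟨Nat.mul_ne_zero hu.ne' hv.ne'⟩
  rw [Stmt12Aux.expSumS_eq_zSum, Stmt12Aux.expSumS_eq_zSum, Stmt12Aux.expSumS_eq_zSum]
  exact Stmt12Aux.zSum_mul n A k u v huv ubar vbar hvbar hubar c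
end
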